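/- Let V be a finite set, p : V × V → [0,∞) symmetric, c : V → [0,∞), α, γ : V → [0,∞), and let L be the boundary-driven independent random walkers generator L f(η) = ∑_{i,j ∈ V} p(i,j) [ η_i (f(η − δ_i + δ_j) − f(η)) + η_j (f(η + δ_i − δ_j) − f(η)) ] + ∑_{i ∈ V} c(i) [ α_i (f(η + δ_i) − f(η)) + γ_i η_i (f(η − δ_i) − f(η)) ]. Suppose ζ* ∈ (0,∞)^V satisfies, for every i ∈ V, 2 ∑_{j ∈ V} p(i,j)(ζ*_j − ζ*_i) + c(i)(α_i − γ_i ζ*_i) = 0 (i.e., ζ* is a fixed point of the deterministic intertwined flow). Then the product of Poisson distributions with parameters (ζ*_i)_{i ∈ V} is stationary for L: for every finitely supported f : ℕ^V → ℝ, ∑_{η ∈ ℕ^V} (Lf)(η) ∏_{i ∈ V} ( (ζ*_i)^{η_i} e^{−ζ*_i} / η_i! ) = 0. -/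
import Mathlib


open MeasureTheory Real

variable {V : Type*} [Fintype V] [DecidableEq V]

/-- Move one particle from site `i` to site `j`. -/
def moveParticle (η : V → ℕ) (i j : V) : V → ℕ :=
  Function.update (Function.update η i (η i - 1)) j
    (Function.update η i (η i - 1) j + 1)

/-- Add a particle at site `i`. -/
def addParticle (η : V → ℕ) (i : V) : V → ℕ := Function.update η i (η i + 1)

/-- Remove a particle at site `i`. -/
def removeParticle (η : V → ℕ) (i : V) : V → ℕ := Function.update η i (η i - 1)

/-- The boundary-driven independent random walkers generator. -/
noncomputable def irwGen (p : V → V → ℝ) (c α γ : V → ℝ)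
    (f : (V → ℕ) → ℝ) (η : V → ℕ) : ℝ :=
  (∑ i : V, ∑ j : V, p i j *
    ((η i : ℝ) * (f (moveParticle η i j) - f η) +
     (η j : ℝ) * (f (moveParticle η j i) - f η))) +
  ∑ i : V, c i *
    (α i * (f (addParticle η i) - f η) +
     γ i * (η i : ℝ) * (f (removeParticle η i) - f η))

set_option linter.unusedSectionVars false
set_option linter.unusedVariables false

noncomputable def pm (ζs : V → ℝ) (η : V → ℕ) : ℝ :=
  ∏ i : V, (ζs i) ^ η i * Real.exp (-ζs i) / (η i).factorial

lemma rem_add (η : V → ℕ) (i : V) : removeParticle (addParticle η i) i = η := by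
  simp [removeParticle, addParticle, Function.update_idem]

lemma add_rem (η : V → ℕ) (i : V) (h : η i ≠ 0) :
    addParticle (removeParticle η i) i = η := by
  simp only [addParticle, removeParticle, Function.update_self, Function.update_idem]
  rw [Nat.sub_add_cancel (Nat.one_le_iff_ne_zero.2 h), Function.update_eq_self]

lemma add_inj (i : V) : Function.Injective (fun η : V → ℕ => addParticle η i) := by
  intro a b h
  have := congrArg (fun η => removeParticle η i) h
  simpa [rem_add] using this

lemma mov_eq (η : V → ℕ) (i j : V) :
    moveParticle η i j = addParticle (removeParticle η i) j := rfl

lemma pm_add (ζs : V → ℝ) (ξ : V → ℕ) (i : V) :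
    ((ξ i : ℝ) + 1) * pm ζs (addParticle ξ i) = ζs i * pm ζs ξ := by
  unfold pm
  rw [Fintype.prod_eq_mul_prod_compl i, Fintype.prod_eq_mul_prod_compl i]
  have hc : ∏ x ∈ ({i}ᶜ : Finset V), (ζs x) ^ (addParticle ξ i x) * Real.exp (-ζs x) / (addParticle ξ i x).factorial
      = ∏ x ∈ ({i}ᶜ : Finset V), (ζs x) ^ (ξ x) * Real.exp (-ζs x) / (ξ x).factorial := by
    refine Finset.prod_congr rfl fun x hx => ?_
    have : x ≠ i := by simpa using hx
    rw [addParticle, Function.update_of_ne this]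
  rw [hc, addParticle, Function.update_self]
  have h1 : ((ξ i + 1).factorial : ℝ) = ((ξ i : ℝ) + 1) * (ξ i).factorial := by
    rw [Nat.factorial_succ]; push_cast; ring
  have h2 : ((ξ i).factorial : ℝ) ≠ 0 := Nat.cast_ne_zero.2 (Nat.factorial_ne_zero _)
  have h3 : ((ξ i : ℝ) + 1) ≠ 0 := by positivity
  have key : ((ξ i : ℝ) + 1) * ((ζs i) ^ (ξ i + 1) * Real.exp (-ζs i) / ((ξ i + 1).factorial : ℝ))
      = ζs i * ((ζs i) ^ (ξ i) * Real.exp (-ζs i) / ((ξ i).factorial : ℝ)) := by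
    rw [h1, pow_succ]
    field_simp
  linear_combination (∏ x ∈ ({i}ᶜ : Finset V), (ζs x) ^ (ξ x) * Real.exp (-ζs x) / ((ξ x).factorial : ℝ)) * key

lemma mecke (ζs : V → ℝ) (i : V) (g : (V → ℕ) → ℝ) :
    ∑' η : V → ℕ, (η i : ℝ) * pm ζs η * g (removeParticle η i)
      = ζs i * ∑' ξ : V → ℕ, pm ζs ξ * g ξ := by
  rw [← tsum_mul_left]
  refine ((add_inj i).tsum_eq ?_).symm.trans (tsum_congr fun ξ => ?_)
  · intro η hη
    rcases Nat.eq_zero_or_pos (η i) with h0 | h1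
    · exact absurd (by simp [h0]) hη
    · exact ⟨removeParticle η i, add_rem η i h1.ne'⟩
  · simp only [rem_add]
    have h1 : addParticle ξ i i = ξ i + 1 := Function.update_self _ _ _
    rw [h1]
    push_cast
    linear_combination g ξ * pm_add ζs ξ i

section Supp
variable (ζs : V → ℝ) (f : (V → ℕ) → ℝ)

lemma suppM (hf : (Function.support f).Finite) (i j : V) :
    (Function.support fun η : V → ℕ =>
      (η i : ℝ) * pm ζs η * f (moveParticle η i j)).Finite := by
  refine Set.Finite.subset (hf.image (fun ξ => addParticle (removeParticle ξ j) i)) ?_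
  intro η hη
  simp only [Function.mem_support] at hη
  have hi : η i ≠ 0 := by intro h0; simp [h0] at hη
  have hfm : moveParticle η i j ∈ Function.support f := by
    intro h; exact hη (by simp [h])
  exact ⟨moveParticle η i j, hfm, by simp only [mov_eq]; rw [rem_add, add_rem η i hi]⟩

lemma suppN (hf : (Function.support f).Finite) (i : V) :
    (Function.support fun η : V → ℕ => (η i : ℝ) * pm ζs η * f η).Finite := by
  refine Set.Finite.subset hf ?_
  intro η hη
  simp only [Function.mem_support] at hη
  intro h; exact hη (by simp [h])

lemma suppP (hf : (Function.support f).Finite) (i : V) :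
    (Function.support fun η : V → ℕ => pm ζs η * f (addParticle η i)).Finite := by
  refine Set.Finite.subset (hf.image (fun ξ => removeParticle ξ i)) ?_
  intro η hη
  simp only [Function.mem_support] at hη
  have hfm : addParticle η i ∈ Function.support f := by
    intro h; exact hη (by simp [h])
  exact ⟨addParticle η i, hfm, rem_add η i⟩

lemma suppQ (hf : (Function.support f).Finite) : (Function.support fun η : V → ℕ => pm ζs η * f η).Finite := by
  refine Set.Finite.subset hf ?_
  intro η hη
  simp only [Function.mem_support] at hη
  intro h; exact hη (by simp [h])

lemma suppR (hf : (Function.support f).Finite) (i : V) :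
    (Function.support fun η : V → ℕ =>
      (η i : ℝ) * pm ζs η * f (removeParticle η i)).Finite := by
  refine Set.Finite.subset (hf.image (fun ξ => addParticle ξ i)) ?_
  intro η hη
  simp only [Function.mem_support] at hη
  have hi : η i ≠ 0 := by intro h0; simp [h0] at hη
  have hfm : removeParticle η i ∈ Function.support f := by
    intro h; exact hη (by simp [h])
  exact ⟨removeParticle η i, hfm, add_rem η i hi⟩

end Supp

/-- If `ζ*` is a fixed point of the deterministic intertwined flow, then the product of
Poisson distributions with parameters `(ζ*_i)` is stationary for the boundary-driven
independent random walkers. -/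
theorem poisson_product_stationary_irw (p : V → V → ℝ) (c α γ : V → ℝ)
    (hp : ∀ i j, 0 ≤ p i j) (hpsymm : ∀ i j, p i j = p j i)
    (hc : ∀ i, 0 ≤ c i) (hα : ∀ i, 0 ≤ α i) (hγ : ∀ i, 0 ≤ γ i)
    (ζs : V → ℝ) (hζs : ∀ i, 0 < ζs i)
    (hfix : ∀ i : V,
      2 * (∑ j : V, p i j * (ζs j - ζs i)) + c i * (α i - γ i * ζs i) = 0)
    (f : (V → ℕ) → ℝ) (hf : (Function.support f).Finite) :
    ∑' η : V → ℕ,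
      irwGen p c α γ f η * ∏ i : V, (ζs i) ^ η i * Real.exp (-ζs i) / (η i).factorial
        = 0 := by
  -- abbreviations
  set S : ℝ := ∑' ξ : V → ℕ, pm ζs ξ * f ξ with hS
  set T : V → ℝ := fun j => ∑' ξ : V → ℕ, pm ζs ξ * f (addParticle ξ j) with hT
  -- summability
  have sM : ∀ i j, Summable fun η : V → ℕ => (η i : ℝ) * pm ζs η * f (moveParticle η i j) :=
    fun i j => summable_of_finite_support (suppM ζs f hf i j)
  have sN : ∀ i, Summable fun η : V → ℕ => (η i : ℝ) * pm ζs η * f η :=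
    fun i => summable_of_finite_support (suppN ζs f hf i)
  have sP : ∀ i, Summable fun η : V → ℕ => pm ζs η * f (addParticle η i) :=
    fun i => summable_of_finite_support (suppP ζs f hf i)
  have sQ : Summable fun η : V → ℕ => pm ζs η * f η :=
    summable_of_finite_support (suppQ ζs f hf)
  have sR : ∀ i, Summable fun η : V → ℕ => (η i : ℝ) * pm ζs η * f (removeParticle η i) :=
    fun i => summable_of_finite_support (suppR ζs f hf i)
  -- tsum values
  have hM : ∀ i j, ∑' η : V → ℕ, (η i : ℝ) * pm ζs η * f (moveParticle η i j)
      = ζs i * T j := fun i j => mecke ζs i (fun ξ => f (addParticle ξ j))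
  have hN : ∀ i, ∑' η : V → ℕ, (η i : ℝ) * pm ζs η * f η = ζs i * T i := by
    intro i
    have := mecke ζs i (fun ξ => f (addParticle ξ i))
    rw [← this]
    refine tsum_congr fun η => ?_
    rcases Nat.eq_zero_or_pos (η i) with h0 | h1
    · simp [h0]
    · rw [add_rem η i h1.ne']
  have hR : ∀ i, ∑' η : V → ℕ, (η i : ℝ) * pm ζs η * f (removeParticle η i)
      = ζs i * S := fun i => mecke ζs i f
  -- pointwise rewriting of the generator
  have hpt : ∀ η : V → ℕ, irwGen p c α γ f η * pm ζs η =
      (∑ i : V, ∑ j : V, p i j *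
        ((η i : ℝ) * pm ζs η * f (moveParticle η i j) - (η i : ℝ) * pm ζs η * f η
          + (η j : ℝ) * pm ζs η * f (moveParticle η j i) - (η j : ℝ) * pm ζs η * f η)) +
      ∑ i : V, c i *
        (α i * (pm ζs η * f (addParticle η i) - pm ζs η * f η) +
         γ i * ((η i : ℝ) * pm ζs η * f (removeParticle η i) - (η i : ℝ) * pm ζs η * f η)) := by
    intro η
    simp only [irwGen, add_mul, Finset.sum_mul]
    congr 1
    · refine Finset.sum_congr rfl fun i _ => Finset.sum_congr rfl fun j _ => ?_
      ring
    · refine Finset.sum_congr rfl fun i _ => ?_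
      ring
  have key : (∑' η : V → ℕ, irwGen p c α γ f η * pm ζs η) =
      (∑ i : V, ∑ j : V, p i j *
        (ζs i * T j - ζs i * T i + ζs j * T i - ζs j * T j)) +
      ∑ i : V, c i * (α i * (T i - S) + γ i * (ζs i * S - ζs i * T i)) := by
    rw [tsum_congr hpt]
    rw [Summable.tsum_add ?_ ?_]
    · congr 1
      · rw [Summable.tsum_finsetSum fun i _ => ?_]
        · refine Finset.sum_congr rfl fun i _ => ?_
          rw [Summable.tsum_finsetSum fun j _ => ((((sM i j).sub (sN i)).add (sM j i)).sub (sN j)).mul_left _]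
          refine Finset.sum_congr rfl fun j _ => ?_
          rw [tsum_mul_left]
          congr 1
          rw [Summable.tsum_sub (((sM i j).sub (sN i)).add (sM j i)) (sN j),
            Summable.tsum_add ((sM i j).sub (sN i)) (sM j i), Summable.tsum_sub (sM i j) (sN i),
            hM, hN, hM, hN]
        · exact summable_sum fun j _ =>
            ((((sM i j).sub (sN i)).add (sM j i)).sub (sN j)).mul_left _
      · rw [Summable.tsum_finsetSum fun i _ =>
          ((((sP i).sub sQ).mul_left (α i)).add
            (((sR i).sub (sN i)).mul_left (γ i))).mul_left (c i)]
        refine Finset.sum_congr rfl fun i _ => ?_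
        rw [tsum_mul_left]
        congr 1
        rw [Summable.tsum_add (((sP i).sub sQ).mul_left (α i)) (((sR i).sub (sN i)).mul_left (γ i)),
          tsum_mul_left, tsum_mul_left, Summable.tsum_sub (sP i) sQ, Summable.tsum_sub (sR i) (sN i),
          hR, hN]
    · exact summable_sum fun i _ => summable_sum fun j _ =>
        ((((sM i j).sub (sN i)).add (sM j i)).sub (sN j)).mul_left _
    · exact summable_sum fun i _ =>
        ((((sP i).sub sQ).mul_left (α i)).add
          (((sR i).sub (sN i)).mul_left (γ i))).mul_left (c i)
  -- the statement's product is `pm`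
  have hprod : (∑' η : V → ℕ,
      irwGen p c α γ f η * ∏ i : V, (ζs i) ^ η i * Real.exp (-ζs i) / (η i).factorial)
      = ∑' η : V → ℕ, irwGen p c α γ f η * pm ζs η := rfl
  rw [hprod, key]
  -- algebra using the fixed point equation and symmetry
  have hci : ∀ i : V, c i * (α i * (T i - S) + γ i * (ζs i * S - ζs i * T i))
      = ∑ j : V, (-2 * p i j * (ζs j - ζs i)) * (T i - S) := by
    intro i
    have h := hfix i
    have h2 : (∑ j : V, (-2 * p i j * (ζs j - ζs i)))
        = -(2 * ∑ j : V, p i j * (ζs j - ζs i)) := by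
      rw [Finset.mul_sum, ← Finset.sum_neg_distrib]
      exact Finset.sum_congr rfl fun j _ => by ring
    rw [← Finset.sum_mul, h2]
    linear_combination (T i - S) * h
  set G : V → V → ℝ := fun i j =>
    p i j * (ζs i * T j - ζs i * T i + ζs j * T i - ζs j * T j)
      + (-2 * p i j * (ζs j - ζs i)) * (T i - S) with hG
  have hYs : (∑ i : V, c i * (α i * (T i - S) + γ i * (ζs i * S - ζs i * T i)))
      = ∑ i : V, ∑ j : V, (-2 * p i j * (ζs j - ζs i)) * (T i - S) :=
    Finset.sum_congr rfl fun i _ => hci i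
  rw [hYs, ← Finset.sum_add_distrib]
  have hmerge : (∑ i : V, ((∑ j : V, p i j * (ζs i * T j - ζs i * T i + ζs j * T i - ζs j * T j))
      + ∑ j : V, (-2 * p i j * (ζs j - ζs i)) * (T i - S)))
      = ∑ i : V, ∑ j : V, G i j :=
    Finset.sum_congr rfl fun i _ => Finset.sum_add_distrib.symm
  rw [hmerge]
  have hanti : ∀ i j : V, G i j + G j i = 0 := by
    intro i j
    simp only [hG]
    rw [hpsymm j i]
    ring
  have hswap : (∑ i : V, ∑ j : V, G i j) = ∑ i : V, ∑ j : V, G j i := Finset.sum_comm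
  have hdouble : (∑ i : V, ∑ j : V, G i j) + (∑ i : V, ∑ j : V, G i j) = 0 := by
    nth_rewrite 2 [hswap]
    rw [← Finset.sum_add_distrib]
    refine Finset.sum_eq_zero fun i _ => ?_
    rw [← Finset.sum_add_distrib]
    exact Finset.sum_eq_zero fun j _ => hanti i j
  linarith
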